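/- Fix a prime p. Let u₁, u₂, u₃ ∈ (0,1) with u₁ + u₂ + u₃ = 2, with non-terminating base p digits dᵢ,ₛ. If dᵢ,ₛ + d₂,ₛ + d₃,ₛ = 2p - 2 for all s up to some minimal e where the sum is 2p - 3 instead, then for all s > e each digit dᵢ,ₛ equals p - 1. -/

import Mathlib

/-!
Measure how far each digit falls short of the maximal digit `p - 1`: the weighted shortfalls
`(3(p - 1) - Σᵢ dᵢ,ₛ) p^{-(s+1)}` are nonnegative and, since `0.(p-1)(p-1)… = 1` in base `p`,
they sum to `3 - (u₁ + u₂ + u₃) = 1`. The hypotheses on the digit sums make the shortfalls at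
positions `s ≤ e` alone add up to `(1 - p^{-e}) + p^{-e} = 1`, so every later shortfall vanishes.
-/

open Finset

lemma sum_range_sub_one_div_pow_succ {x : ℝ} (hx : x ≠ 0) (n : ℕ) :
    ∑ s ∈ range n, (x - 1) / x ^ (s + 1) = 1 - 1 / x ^ n := by
  induction n with
  | zero => simp
  | succ n ih =>
    rw [sum_range_succ, ih]
    field_simp
    ring

lemma eq_zero_of_hasSum_of_sum_range_eq {f : ℕ → ℝ} {a : ℝ} {n : ℕ} (hf : ∀ s, 0 ≤ f s)
    (ha : HasSum f a) (hn : ∑ s ∈ range n, f s = a) {s : ℕ} (hs : n ≤ s) : f s = 0 := by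
  have hle := sum_le_hasSum (insert s (range n)) (fun t _ => hf t) ha
  rw [sum_insert (by simpa using hs), hn] at hle
  exact le_antisymm (by linarith) (hf s)

lemma hasSum_pred_sub_digit_div_pow {p : ℕ} (hp : 1 < p) {a : ℕ → ℕ} (ha : ∀ s, a s < p) :
    HasSum (fun s => ((p : ℝ) - 1 - a s) / p ^ (s + 1)) (1 - ∑' s, (a s : ℝ) / p ^ (s + 1)) := by
  have hlast : HasSum (Real.ofDigitsTerm fun _ => (⟨p - 1, Nat.sub_one_lt_of_lt hp⟩ : Fin p)) 1 :=
    Real.ofDigits_const_last_eq_one' hp ▸ Real.summable_ofDigitsTerm.hasSum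
  have hdig := (Real.summable_ofDigitsTerm (digits := fun s => (⟨a s, ha s⟩ : Fin p))).hasSum
  have hval : ∑' s, (a s : ℝ) / p ^ (s + 1) =
      ∑' s, Real.ofDigitsTerm (fun s => (⟨a s, ha s⟩ : Fin p)) s := by
    simp only [Real.ofDigitsTerm, div_eq_mul_inv]
  rw [hval]
  refine (hlast.sub hdig).congr_fun fun s => ?_
  simp only [Real.ofDigitsTerm, Nat.cast_sub hp.le, Nat.cast_one]
  ring

lemma pred_sub_digit_nonneg {p a : ℕ} (ha : a < p) : 0 ≤ (p : ℝ) - 1 - a := by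
  have : ((a + 1 : ℕ) : ℝ) ≤ p := by exact_mod_cast ha
  push_cast at this
  linarith

section DigitDefect

variable {ι : Type*} [Fintype ι] {p : ℕ} {d : ι → ℕ → ℕ}

noncomputable def digitDefect (p : ℕ) (d : ι → ℕ → ℕ) (s : ℕ) : ℝ :=
  ∑ i, ((p : ℝ) - 1 - d i s) / p ^ (s + 1)

lemma digitDefect_eq (s : ℕ) :
    digitDefect p d s =
      (Fintype.card ι * ((p : ℝ) - 1) - ((∑ i, d i s : ℕ) : ℝ)) / p ^ (s + 1) := by
  simp only [digitDefect, ← sum_div, sum_sub_distrib, sum_const, card_univ, nsmul_eq_mul, mul_sub,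
    mul_one, Nat.cast_sum]

lemma digitDefect_nonneg (hd : ∀ i s, d i s < p) (s : ℕ) : 0 ≤ digitDefect p d s :=
  sum_nonneg fun i _ => div_nonneg (pred_sub_digit_nonneg (hd i s)) (by positivity)

lemma hasSum_digitDefect (hp : 1 < p) (hd : ∀ i s, d i s < p) {u : ι → ℝ}
    (hu : ∀ i, u i = ∑' s, (d i s : ℝ) / p ^ (s + 1)) :
    HasSum (digitDefect p d) (Fintype.card ι - ∑ i, u i) := by
  have := hasSum_sum fun i (_ : i ∈ univ) =>
    (hu i).symm ▸ hasSum_pred_sub_digit_div_pow hp (hd i)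
  rwa [sum_sub_distrib, sum_const, card_univ, nsmul_one] at this

lemma digit_eq_pred_of_digitDefect_eq_zero (hp : 1 < p) (hd : ∀ i s, d i s < p) {s : ℕ}
    (hs : digitDefect p d s = 0) (i : ι) : d i s = p - 1 := by
  have hterm := (sum_eq_zero_iff_of_nonneg fun j _ =>
    div_nonneg (pred_sub_digit_nonneg (hd j s)) (by positivity)).mp hs i (mem_univ i)
  rw [div_eq_zero_iff, or_iff_left (by positivity), sub_eq_zero, sub_eq_iff_eq_add] at hterm
  exact Nat.eq_sub_of_add_eq (by exact_mod_cast hterm.symm)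

end DigitDefect

theorem stmt12_general (p : ℕ) (hp : p.Prime) (u : Fin 3 → ℝ) (d : Fin 3 → ℕ → ℕ)
    (hsum : u 0 + u 1 + u 2 = 2)
    (hdig : ∀ i s, d i s < p)
    (hexp : ∀ i, u i = ∑' s : ℕ, (d i s : ℝ) / p ^ (s + 1))
    (e : ℕ)
    (hmin : ∀ s < e, d 0 s + d 1 s + d 2 s = 2 * p - 2)
    (he : d 0 e + d 1 e + d 2 e = 2 * p - 3) :
    ∀ s, e < s → ∀ i, d i s = p - 1 := by
  have hp1 : 1 < p := hp.one_lt
  have hdefect : HasSum (digitDefect p d) 1 := by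
    convert hasSum_digitDefect hp1 hdig hexp using 1
    simp only [Fintype.card_fin, Fin.sum_univ_three, hsum]
    norm_num
  have hbefore : ∀ s ∈ range e, digitDefect p d s = ((p : ℝ) - 1) / p ^ (s + 1) := by
    intro s hs
    rw [digitDefect_eq, Fintype.card_fin, Fin.sum_univ_three, hmin s (mem_range.mp hs),
      Nat.cast_sub (by omega)]
    push_cast
    ring
  have hat : digitDefect p d e = 1 / p ^ e := by
    rw [digitDefect_eq, Fintype.card_fin, Fin.sum_univ_three, he, Nat.cast_sub (by omega)]
    field_simp
    push_cast
    ring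
  have hupto : ∑ s ∈ range (e + 1), digitDefect p d s = 1 := by
    rw [sum_range_succ, sum_congr rfl hbefore, sum_range_sub_one_div_pow_succ (by positivity), hat]
    ring
  intro s hs i
  exact digit_eq_pred_of_digitDefect_eq_zero hp1 hdig
    (eq_zero_of_hasSum_of_sum_range_eq (digitDefect_nonneg hdig) hdefect hupto hs) i

/-- If `u₁,u₂,u₃ ∈ (0,1)` sum to `2`, have non-terminating base-`p` expansions with digit
sums `2p−2` at all positions before a minimal position `e` where the digit sum is `2p−3`,
then every digit at every position after `e` equals `p−1`. -/
theorem stmt12 (p : ℕ) (hp : p.Prime) (u : Fin 3 → ℝ) (d : Fin 3 → ℕ → ℕ)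
    (hu : ∀ i, u i ∈ Set.Ioo (0 : ℝ) 1)
    (hsum : u 0 + u 1 + u 2 = 2)
    (hdig : ∀ i s, d i s < p)
    (hexp : ∀ i, u i = ∑' s : ℕ, (d i s : ℝ) / p ^ (s + 1))
    (hnt : ∀ i N, ∃ s, N ≤ s ∧ d i s ≠ 0)
    (e : ℕ)
    (hmin : ∀ s < e, d 0 s + d 1 s + d 2 s = 2 * p - 2)
    (he : d 0 e + d 1 e + d 2 e = 2 * p - 3) :
    ∀ s, e < s → ∀ i, d i s = p - 1 :=
  stmt12_general p hp u d hsum hdig hexp e hmin he
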